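/- arXiv:2107.10382 — 5 statements merged into one kernel-verified Lean document; each statement's English description precedes it below -/
import Mathlib

section
/- Let ℓ be a line (a one-dimensional affine subspace) in ℝ², let d ∈ ℝ², and let q₁, q₂ ∈ ℝ² lie strictly on opposite sides of ℓ, i.e., q₁ ∉ ℓ, q₂ ∉ ℓ, and the open segment between q₁ and q₂ meets ℓ. Let p₁, p₂ ∈ ℓ with p₁ ≠ p₂, and suppose that for each i ∈ {1,2}, p_i minimizes x ↦ dist(d, x) + dist(x, q_i) over ℓ. Then ∠(q₁, p₁, p₂) + ∠(q₂, p₂, p₁) ≥ π, where ∠(a, b, c) denotes the undirected angle at b between the rays from b to a and from b to c, valued in [0, π]. -/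
open EuclideanGeometry

private lemma zig_aux_mem (ℓ : AffineSubspace ℝ (EuclideanSpace ℝ (Fin 2)))
    (d q p : EuclideanSpace ℝ (Fin 2)) (hd : d ∈ ℓ) (hq : q ∉ ℓ) (hp : p ∈ ℓ)
    (hmin : ∀ x ∈ ℓ, dist d p + dist p q ≤ dist d x + dist x q) : p = d := by
  have h1 : dist d p + dist p q ≤ dist d q := by simpa using hmin d hd
  have heq : dist d p + dist p q = dist d q := le_antisymm h1 (dist_triangle d p q)
  have hw : Wbtw ℝ d p q := dist_add_dist_eq_iff.mp heq
  by_contra hne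
  obtain ⟨t, ht, hteq⟩ := hw
  rw [AffineMap.lineMap_apply_module] at hteq
  have ht0 : t ≠ 0 := by
    rintro rfl; apply hne; rw [← hteq]; simp
  have hq' : q = t⁻¹ • (p -ᵥ d) +ᵥ d := by
    rw [vsub_eq_sub, vadd_eq_add, ← hteq,
      show (1 - t) • d + t • q - d = t • (q - d) by module,
      smul_smul, inv_mul_cancel₀ ht0, one_smul]
    abel
  exact hq (hq' ▸ AffineSubspace.smul_vsub_vadd_mem ℓ t⁻¹ hp hd hd)

private lemma zig_aux_refl (ℓ : AffineSubspace ℝ (EuclideanSpace ℝ (Fin 2)))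
    [Nonempty ℓ] [ℓ.direction.HasOrthogonalProjection]
    (φ : EuclideanSpace ℝ (Fin 2) → ℝ)
    (hφ0 : ∀ x, x ∈ ℓ ↔ φ x = 0)
    (hφR : ∀ x, φ (reflection ℓ x) = - φ x)
    (hφaff : ∀ x y : EuclideanSpace ℝ (Fin 2), ∀ t : ℝ,
      φ (x + t • (y - x)) = φ x + t * (φ y - φ x))
    (d q p r : EuclideanSpace ℝ (Fin 2)) (hd : d ∉ ℓ) (hq : q ∉ ℓ) (hp : p ∈ ℓ) (hr : r ∈ ℓ)
    (hφd : 0 < φ d)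
    (hmin : ∀ x ∈ ℓ, dist d p + dist p q ≤ dist d x + dist x q) :
    ∠ d p r + ∠ q p r = Real.pi := by
  have hφq : φ q ≠ 0 := fun h => hq ((hφ0 q).mpr h)
  obtain ⟨c, hcd, hcq, hcnot, hangle⟩ :
      ∃ c, φ c < 0 ∧ (∀ x ∈ ℓ, dist x c = dist x q) ∧ c ∉ ℓ ∧ ∠ c p r = ∠ q p r := by
    rcases lt_or_gt_of_ne hφq with h | h
    · exact ⟨q, h, fun x _ => rfl, hq, rfl⟩
    · refine ⟨reflection ℓ q, ?_, ?_, ?_, ?_⟩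
      · rw [hφR]; linarith
      · intro x hx; exact EuclideanGeometry.dist_reflection_eq_of_mem ℓ hx q
      · intro hmem
        have h0 : φ (reflection ℓ q) = 0 := (hφ0 _).mp hmem
        rw [hφR] at h0
        exact hφq (by linarith)
      · calc ∠ (reflection ℓ q) p r
            = ∠ (reflection ℓ q) (reflection ℓ p) (reflection ℓ r) := by
              rw [(EuclideanGeometry.reflection_eq_self_iff p).mpr hp,
                (EuclideanGeometry.reflection_eq_self_iff r).mpr hr]
          _ = ∠ q p r := (reflection ℓ).toAffineIsometry.angle_map q p r
  -- crossing point
  set t : ℝ := φ d / (φ d - φ c) with ht_def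
  have hden : 0 < φ d - φ c := by linarith
  have ht0 : 0 ≤ t := (div_pos hφd hden).le
  have ht1 : t ≤ 1 := by rw [ht_def, div_le_one hden]; linarith
  set x₀ : EuclideanSpace ℝ (Fin 2) := d + t • (c - d) with hx₀_def
  have hx₀ℓ : x₀ ∈ ℓ := by
    rw [hφ0, hx₀_def, hφaff]
    field_simp [ht_def]
    have htm : t * (φ d - φ c) = φ d := by rw [ht_def]; exact div_mul_cancel₀ _ hden.ne'
    linear_combination -htm
  have hwb : Wbtw ℝ d x₀ c := by
    rw [← mem_segment_iff_wbtw, segment_eq_image']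
    exact ⟨t, ⟨ht0, ht1⟩, rfl⟩
  have hsum : dist d x₀ + dist x₀ c = dist d c := dist_add_dist_eq_iff.mpr hwb
  have hle : dist d p + dist p c ≤ dist d c := by
    have h := hmin x₀ hx₀ℓ
    rw [← hcq p hp, ← hcq x₀ hx₀ℓ] at h
    linarith
  have heq : dist d p + dist p c = dist d c := le_antisymm hle (dist_triangle d p c)
  have hwbp : Wbtw ℝ d p c := dist_add_dist_eq_iff.mp heq
  have hsb : Sbtw ℝ d p c :=
    ⟨hwbp, fun h => hd (h ▸ hp), fun h => hcnot (h ▸ hp)⟩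
  have hπ : ∠ d p c = Real.pi := EuclideanGeometry.angle_eq_pi_iff_sbtw.mpr hsb
  have hfin := EuclideanGeometry.angle_add_angle_eq_pi_of_angle_eq_pi r hπ
  rw [EuclideanGeometry.angle_comm r p d, EuclideanGeometry.angle_comm r p c, hangle] at hfin
  exact hfin

/-- Two locally shortest paths from a common depot `d` touching a line `ℓ` at
distinct points `p₁ ≠ p₂` and continuing to points `q₁`, `q₂` lying strictly on
opposite sides of `ℓ` cannot form a zigzag: the two outgoing angles sum to at
least `π`. -/
theorem no_zigzag_at_first_segment
    (ℓ : AffineSubspace ℝ (EuclideanSpace ℝ (Fin 2)))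
    (hne : (ℓ : Set (EuclideanSpace ℝ (Fin 2))).Nonempty)
    (hdim : Module.finrank ℝ ℓ.direction = 1)
    (d q₁ q₂ : EuclideanSpace ℝ (Fin 2))
    (hq₁ : q₁ ∉ ℓ) (hq₂ : q₂ ∉ ℓ)
    (hopp : (openSegment ℝ q₁ q₂ ∩ (ℓ : Set (EuclideanSpace ℝ (Fin 2)))).Nonempty)
    (p₁ p₂ : EuclideanSpace ℝ (Fin 2)) (hp₁ : p₁ ∈ ℓ) (hp₂ : p₂ ∈ ℓ)
    (hp₁₂ : p₁ ≠ p₂)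
    (hmin₁ : ∀ x ∈ ℓ, dist d p₁ + dist p₁ q₁ ≤ dist d x + dist x q₁)
    (hmin₂ : ∀ x ∈ ℓ, dist d p₂ + dist p₂ q₂ ≤ dist d x + dist x q₂) :
    Real.pi ≤ ∠ q₁ p₁ p₂ + ∠ q₂ p₂ p₁ := by
  by_cases hd : d ∈ ℓ
  · exact absurd ((zig_aux_mem ℓ d q₁ p₁ hd hq₁ hp₁ hmin₁).trans
      (zig_aux_mem ℓ d q₂ p₂ hd hq₂ hp₂ hmin₂).symm) hp₁₂
  haveI : Nonempty ℓ := hne.to_subtype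
  obtain ⟨p₀, hp₀⟩ := hne
  -- construct the affine functional φ₀ and normalize its sign at d
  have hrank : Module.finrank ℝ (ℓ.directionᗮ : Submodule ℝ (EuclideanSpace ℝ (Fin 2))) = 1 := by
    have h2 : Module.finrank ℝ (EuclideanSpace ℝ (Fin 2)) = 2 := by simp
    have := Submodule.finrank_add_finrank_orthogonal (K := ℓ.direction)
    omega
  obtain ⟨n, hn_mem, hn0⟩ : ∃ n ∈ ℓ.directionᗮ, n ≠ 0 := by
    obtain ⟨b, hb, hb0⟩ := Submodule.exists_mem_ne_zero_of_ne_bot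
      (p := ℓ.directionᗮ) (by intro h; rw [h] at hrank; simp at hrank)
    exact ⟨b, hb, hb0⟩
  have key : ∀ n : EuclideanSpace ℝ (Fin 2), n ∈ ℓ.directionᗮ → n ≠ 0 →
      ∀ φ : EuclideanSpace ℝ (Fin 2) → ℝ, (φ = fun x => inner ℝ n (x - p₀)) →
      (∀ x, x ∈ ℓ ↔ φ x = 0) ∧ (∀ x, φ (reflection ℓ x) = - φ x) ∧
      (∀ x y : EuclideanSpace ℝ (Fin 2), ∀ t : ℝ,
        φ (x + t • (y - x)) = φ x + t * (φ y - φ x)) := by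
    intro n hn_mem hn0 φ hφ_def
    have hφmem : ∀ x ∈ ℓ, φ x = 0 := by
      intro x hx
      have hv : x - p₀ ∈ ℓ.direction := AffineSubspace.vsub_mem_direction hx hp₀
      have h0 := (Submodule.mem_orthogonal ℓ.direction n).mp hn_mem (x - p₀) hv
      simp only [hφ_def]
      rw [real_inner_comm]
      exact h0
    have hspan : (ℝ ∙ n) = ℓ.directionᗮ := by
      apply Submodule.eq_of_le_of_finrank_eq
      · rwa [Submodule.span_singleton_le_iff_mem]
      · rw [finrank_span_singleton hn0, hrank]
    refine ⟨?_, ?_, ?_⟩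
    · intro x
      refine ⟨hφmem x, fun h => ?_⟩
      have hv : x - p₀ ∈ (ℝ ∙ n)ᗮ := by
        rw [Submodule.mem_orthogonal]
        rintro u hu
        obtain ⟨a, rfl⟩ := Submodule.mem_span_singleton.mp hu
        rw [inner_smul_left]
        simp only [RCLike.conj_to_real]
        rw [hφ_def] at h
        rw [show (inner ℝ n (x - p₀) : ℝ) = 0 from h, mul_zero]
      rw [hspan, Submodule.orthogonal_orthogonal] at hv
      exact (AffineSubspace.vsub_right_mem_direction_iff_mem hp₀ x).mp hv
    · intro x
      set m : EuclideanSpace ℝ (Fin 2) :=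
        (EuclideanGeometry.orthogonalProjection ℓ x : EuclideanSpace ℝ (Fin 2)) with hm_def
      have hm : m ∈ ℓ := EuclideanGeometry.orthogonalProjection_mem x
      have h1 : reflection ℓ x - p₀ = (m - p₀) + (m - p₀) - (x - p₀) := by
        rw [EuclideanGeometry.reflection_apply']
        simp only [vsub_eq_sub, vadd_eq_add, ← hm_def]
        abel
      have hmz := hφmem m hm
      simp only [hφ_def] at hmz ⊢
      simp only [h1, inner_sub_right, inner_add_right]
      rw [inner_sub_right] at hmz
      linarith
    · intro x y t
      have hyx : (y - p₀) - (x - p₀) = y - x := by abel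
      have h1 : x + t • (y - x) - p₀ = (x - p₀) + t • ((y - p₀) - (x - p₀)) := by
        rw [hyx]; abel
      rw [hφ_def]
      simp only [h1, inner_add_right, inner_smul_right, inner_sub_right]
  -- normalize sign at d
  have hdmem : ∀ (φ : EuclideanSpace ℝ (Fin 2) → ℝ), (∀ x, x ∈ ℓ ↔ φ x = 0) → φ d ≠ 0 :=
    fun φ h hz => hd ((h d).mpr hz)
  obtain ⟨φ, hφ0, hφR, hφaff, hφd⟩ :
      ∃ φ : EuclideanSpace ℝ (Fin 2) → ℝ, (∀ x, x ∈ ℓ ↔ φ x = 0) ∧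
        (∀ x, φ (reflection ℓ x) = - φ x) ∧
        (∀ x y : EuclideanSpace ℝ (Fin 2), ∀ t : ℝ,
          φ (x + t • (y - x)) = φ x + t * (φ y - φ x)) ∧ 0 < φ d := by
    obtain ⟨h0, hR, haff⟩ := key n hn_mem hn0 _ rfl
    rcases lt_or_gt_of_ne (hdmem _ h0) with h | h
    · obtain ⟨h0', hR', haff'⟩ := key (-n) (Submodule.neg_mem _ hn_mem) (neg_ne_zero.mpr hn0)
        (fun x => inner ℝ (-n) (x - p₀)) rfl
      refine ⟨_, h0', hR', haff', ?_⟩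
      show (0:ℝ) < inner ℝ (-n) (d - p₀)
      rw [inner_neg_left]
      exact neg_pos.mpr h
    · exact ⟨_, h0, hR, haff, h⟩
  have h1 : ∠ d p₁ p₂ + ∠ q₁ p₁ p₂ = Real.pi :=
    zig_aux_refl ℓ φ hφ0 hφR hφaff d q₁ p₁ p₂ hd hq₁ hp₁ hp₂ hφd hmin₁
  have h2 : ∠ d p₂ p₁ + ∠ q₂ p₂ p₁ = Real.pi :=
    zig_aux_refl ℓ φ hφ0 hφR hφaff d q₂ p₂ p₁ hd hq₂ hp₂ hp₁ hφd hmin₂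
  have htri : ∠ d p₁ p₂ + ∠ p₁ p₂ d + ∠ p₂ d p₁ = Real.pi :=
    EuclideanGeometry.angle_add_angle_add_angle_eq_pi p₂
      (fun h => hd (h ▸ hp₁))
  have hcomm : ∠ p₁ p₂ d = ∠ d p₂ p₁ := EuclideanGeometry.angle_comm _ _ _
  have hnn : 0 ≤ ∠ p₂ d p₁ := EuclideanGeometry.angle_nonneg _ _ _
  linarith
end

section
/- Let d ∈ ℝ² be a depot and let L₁, …, L_k ⊆ ℝ² be closed segments, each with two distinct endpoints, and let ℓ_i denote the line (affine span) containing L_i. Suppose (p₁, …, p_k) and (q₁, …, q_k), with p_i, q_i ∈ L_i for each i, both minimize the tour length over L₁ × ⋯ × L_k. Setting p₀ = q₀ = d, assume that for every i with 1 ≤ i ≤ k, p_{i−1} ∉ ℓ_i and q_{i−1} ∉ ℓ_i. Then p_i = q_i for all i. -/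
lemma seg_sub_span' {a b x : EuclideanSpace ℝ (Fin 2)} (h : x ∈ segment ℝ a b) :
    x ∈ affineSpan ℝ ({a, b} : Set (EuclideanSpace ℝ (Fin 2))) := by
  have h2 := convexHull_subset_affineSpan (𝕜 := ℝ) ({a, b} : Set (EuclideanSpace ℝ (Fin 2)))
  rw [convexHull_pair] at h2
  exact h2 h



/-- Uniqueness of the shortest tour through line segments in a fixed order:
if `(p₁, …, p_k)` and `(q₁, …, q_k)` (with `p₀ = q₀ = p_{k+1} = q_{k+1} = d`)
both minimize the tour length over the segments `Lᵢ = [aᵢ, bᵢ]`, and neither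
tour approaches any segment along the line containing it (i.e. `p_{i−1}` and
`q_{i−1}` are off the line `ℓᵢ` spanned by `L_i`), then the two tours agree. -/
theorem shortest_tour_through_segments_unique (k : ℕ)
    (d : EuclideanSpace ℝ (Fin 2))
    (a b : ℕ → EuclideanSpace ℝ (Fin 2))
    (hab : ∀ i, 1 ≤ i → i ≤ k → a i ≠ b i)
    (p q : ℕ → EuclideanSpace ℝ (Fin 2))
    (hp0 : p 0 = d) (hpk : p (k + 1) = d)
    (hq0 : q 0 = d) (hqk : q (k + 1) = d)
    (hpmem : ∀ i, 1 ≤ i → i ≤ k → p i ∈ segment ℝ (a i) (b i))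
    (hqmem : ∀ i, 1 ≤ i → i ≤ k → q i ∈ segment ℝ (a i) (b i))
    (hpmin : ∀ r : ℕ → EuclideanSpace ℝ (Fin 2), r 0 = d → r (k + 1) = d →
      (∀ i, 1 ≤ i → i ≤ k → r i ∈ segment ℝ (a i) (b i)) →
      ∑ i ∈ Finset.range (k + 1), dist (p i) (p (i + 1)) ≤
        ∑ i ∈ Finset.range (k + 1), dist (r i) (r (i + 1)))
    (hqmin : ∀ r : ℕ → EuclideanSpace ℝ (Fin 2), r 0 = d → r (k + 1) = d →
      (∀ i, 1 ≤ i → i ≤ k → r i ∈ segment ℝ (a i) (b i)) →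
      ∑ i ∈ Finset.range (k + 1), dist (q i) (q (i + 1)) ≤
        ∑ i ∈ Finset.range (k + 1), dist (r i) (r (i + 1)))
    (hpnd : ∀ i, 1 ≤ i → i ≤ k →
      p (i - 1) ∉ affineSpan ℝ ({a i, b i} : Set (EuclideanSpace ℝ (Fin 2))))
    (hqnd : ∀ i, 1 ≤ i → i ≤ k →
      q (i - 1) ∉ affineSpan ℝ ({a i, b i} : Set (EuclideanSpace ℝ (Fin 2)))) :
    ∀ i ≤ k + 1, p i = q i := by
  -- the midpoint tour
  set m : ℕ → EuclideanSpace ℝ (Fin 2) := fun i => midpoint ℝ (p i) (q i) with hm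
  have hm0 : m 0 = d := by simp [hm, hp0, hq0]
  have hmk : m (k + 1) = d := by simp [hm, hpk, hqk]
  have hmidrep : ∀ x y : EuclideanSpace ℝ (Fin 2),
      midpoint ℝ x y = (1/2 : ℝ) • x + (1/2 : ℝ) • y := by
    intro x y; rw [midpoint_eq_smul_add, smul_add]; norm_num
  have hmmem : ∀ i, 1 ≤ i → i ≤ k → m i ∈ segment ℝ (a i) (b i) := by
    intro i h1 h2
    have := (convex_segment (a i) (b i)) (hpmem i h1 h2) (hqmem i h1 h2)
      (by norm_num : (0:ℝ) ≤ 1/2) (by norm_num : (0:ℝ) ≤ 1/2) (by norm_num)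
    simpa [hm, hmidrep] using this
  -- both tours have the same length
  have hLpq : ∑ i ∈ Finset.range (k + 1), dist (p i) (p (i + 1)) =
      ∑ i ∈ Finset.range (k + 1), dist (q i) (q (i + 1)) :=
    le_antisymm (hpmin q hq0 hqk hqmem) (hqmin p hp0 hpk hpmem)
  -- termwise convexity
  have hle : ∀ i ∈ Finset.range (k + 1), dist (m i) (m (i + 1)) ≤
      (dist (p i) (p (i + 1)) + dist (q i) (q (i + 1))) / 2 := by
    intro i _
    exact dist_midpoint_midpoint_le _ _ _ _
  have hsumhalf : ∑ i ∈ Finset.range (k + 1),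
      (dist (p i) (p (i + 1)) + dist (q i) (q (i + 1))) / 2 =
      ∑ i ∈ Finset.range (k + 1), dist (p i) (p (i + 1)) := by
    rw [← Finset.sum_div, Finset.sum_add_distrib, ← hLpq]
    ring
  have hsum_eq : ∑ i ∈ Finset.range (k + 1), dist (m i) (m (i + 1)) =
      ∑ i ∈ Finset.range (k + 1),
        (dist (p i) (p (i + 1)) + dist (q i) (q (i + 1))) / 2 := by
    refine le_antisymm (Finset.sum_le_sum hle) ?_
    rw [hsumhalf]
    exact hpmin m hm0 hmk hmmem
  have heq : ∀ i ∈ Finset.range (k + 1), dist (m i) (m (i + 1)) =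
      (dist (p i) (p (i + 1)) + dist (q i) (q (i + 1))) / 2 :=
    fun i hi => ((Finset.sum_eq_sum_iff_of_le hle).mp hsum_eq) i hi
  -- the key induction
  have key : ∀ i, i ≤ k → p i = q i := by
    intro i
    induction i with
    | zero => intro _; rw [hp0, hq0]
    | succ n ih =>
      intro hnk
      have hxy : p n = q n := ih (by omega)
      set x := p n with hx
      set y := p (n + 1) with hy
      set z := q (n + 1) with hz
      -- the segment line for index n+1
      have h1 : 1 ≤ n + 1 := by omega
      have hxnot : x ∉ affineSpan ℝ ({a (n+1), b (n+1)} : Set (EuclideanSpace ℝ (Fin 2))) := by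
        have := hpnd (n+1) h1 hnk
        simpa using this
      have hyA : y ∈ affineSpan ℝ ({a (n+1), b (n+1)} : Set (EuclideanSpace ℝ (Fin 2))) :=
        seg_sub_span' (hpmem (n+1) h1 hnk)
      have hzA : z ∈ affineSpan ℝ ({a (n+1), b (n+1)} : Set (EuclideanSpace ℝ (Fin 2))) :=
        seg_sub_span' (hqmem (n+1) h1 hnk)
      have hyx : y ≠ x := fun h => hxnot (h ▸ hyA)
      -- extract the norm equality
      have hmn : m n = x := by simp [hm, ← hxy]; rfl
      have heqn := heq n (Finset.mem_range.mpr (by omega))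
      rw [hmn, ← hxy] at heqn
      have hmid2 : m (n+1) - x = (2:ℝ)⁻¹ • ((y - x) + (z - x)) := by
        show midpoint ℝ (p (n+1)) (q (n+1)) - x = _
        rw [midpoint_eq_smul_add]
        have h2 : (⅟2 : ℝ) = (2:ℝ)⁻¹ := by norm_num
        rw [h2, ← hy, ← hz]; module
      have hnormeq : ‖(y - x) + (z - x)‖ = ‖y - x‖ + ‖z - x‖ := by
        have hd : dist x (m (n+1)) = (2:ℝ)⁻¹ * ‖(y - x) + (z - x)‖ := by
          rw [dist_comm, dist_eq_norm, hmid2, norm_smul]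
          norm_num
        rw [hd] at heqn
        have hd2 : dist x y = ‖y - x‖ := by rw [dist_comm, dist_eq_norm]
        have hd3 : dist x z = ‖z - x‖ := by rw [dist_comm, dist_eq_norm]
        rw [hd2, hd3] at heqn
        linarith
      have hsr : SameRay ℝ (y - x) (z - x) := sameRay_iff_norm_add.mpr hnormeq
      have hu : y - x ≠ 0 := sub_ne_zero.mpr hyx
      obtain ⟨r, hr0, hrv⟩ := hsr.exists_nonneg_left hu
      by_contra hne
      have hr1 : r ≠ 1 := by
        intro h
        apply hne
        have : z - x = y - x := by rw [← hrv, h, one_smul]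
        have := sub_left_injective.eq_iff.mp this
        exact this.symm
      -- x is on the line through y and z
      have hzy : z - y = (r - 1) • (y - x) := by
        have : z - y = (z - x) - (y - x) := by abel
        rw [this, ← hrv, sub_smul, one_smul]
      have hxline : x = AffineMap.lineMap y z (-(r-1)⁻¹) := by
        rw [AffineMap.lineMap_apply]
        have h1 : (z -ᵥ y : EuclideanSpace ℝ (Fin 2)) = z - y := rfl
        rw [h1, hzy, smul_smul]
        have hr1' : r - 1 ≠ 0 := sub_ne_zero.mpr hr1
        rw [neg_mul, inv_mul_cancel₀ hr1']
        show x = (-1 : ℝ) • (y - x) +ᵥ y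
        have h2 : ((-1 : ℝ) • (y - x) +ᵥ y : EuclideanSpace ℝ (Fin 2))
            = (-1 : ℝ) • (y - x) + y := rfl
        rw [h2]; module
      exact hxnot (hxline ▸ AffineMap.lineMap_mem _ hyA hzA)
  intro i hi
  rcases Nat.lt_or_ge i (k + 1) with h | h
  · exact key i (by omega)
  · have : i = k + 1 := by omega
    rw [this, hpk, hqk]
end

section
/- Let d ∈ ℝ² be a depot and let P₁, …, P_k ⊆ ℝ² be convex sets. Suppose (p₁, …, p_k) and (q₁, …, q_k), with p_i, q_i ∈ P_i for each i, both minimize the tour length over P₁ × ⋯ × P_k. Setting p₀ = q₀ = d, assume that for every i with 1 ≤ i ≤ k, if p_i ≠ q_i then p_{i−1} does not lie on the line through p_i and q_i. Then p_i = q_i for all i. -/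
lemma mem_span_of_sameRay {E : Type*} [NormedAddCommGroup E] [NormedSpace ℝ E]
    {a b c : E} (hbc : b ≠ c) (h : SameRay ℝ (a - b) (a - c)) :
    a ∈ affineSpan ℝ ({b, c} : Set E) := by
  rcases h with h | h | ⟨r, s, hr, hs, h⟩
  · rw [sub_eq_zero] at h
    exact h ▸ subset_affineSpan ℝ _ (by simp)
  · rw [sub_eq_zero] at h
    exact h ▸ subset_affineSpan ℝ _ (by simp)
  · set t : ℝ := r⁻¹ * s with htdef
    have ht : a - b = t • (a - c) := by
      have := congrArg (fun x => r⁻¹ • x) h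
      simpa [smul_smul, inv_mul_cancel₀ hr.ne'] using this
    have ht1 : t ≠ 1 := by
      intro h1
      apply hbc
      have h2 : a - b = a - c := by rw [ht, h1, one_smul]
      exact sub_right_inj.mp h2
    have hbc' : b - c = (1 - t) • (a - c) := by
      have : (a - c) - (b - c) = t • (a - c) := by
        simpa [sub_sub_sub_cancel_right] using ht
      have := this
      rw [sub_smul, one_smul]
      linear_combination (norm := abel) -this
    have hac : a - c = (1 - t)⁻¹ • (b - c) := by
      rw [hbc', smul_smul, inv_mul_cancel₀ (by intro h0; exact ht1 (by linarith [sub_eq_zero.mp h0])), one_smul]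
    have : a = AffineMap.lineMap c b ((1 - t)⁻¹) := by
      rw [AffineMap.lineMap_apply]
      simp only [vsub_eq_sub, vadd_eq_add]
      rw [← hac]; abel
    rw [Set.pair_comm]
    exact this ▸ AffineMap.lineMap_mem_affineSpan_pair _ _ _



/-- Uniqueness of the shortest tour through convex regions in a fixed order:
if `(p₁, …, p_k)` and `(q₁, …, q_k)` (with `p₀ = q₀ = p_{k+1} = q_{k+1} = d`)
both minimize the tour length over convex regions `P₁, …, P_k`, and whenever
`pᵢ ≠ qᵢ` the preceding waypoint `p_{i−1}` is not on the line through `pᵢ` and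
`qᵢ`, then the two tours agree. -/
theorem shortest_tour_through_convex_unique (k : ℕ)
    (d : EuclideanSpace ℝ (Fin 2))
    (P : ℕ → Set (EuclideanSpace ℝ (Fin 2)))
    (hP : ∀ i, 1 ≤ i → i ≤ k → Convex ℝ (P i))
    (p q : ℕ → EuclideanSpace ℝ (Fin 2))
    (hp0 : p 0 = d) (hpk : p (k + 1) = d)
    (hq0 : q 0 = d) (hqk : q (k + 1) = d)
    (hpmem : ∀ i, 1 ≤ i → i ≤ k → p i ∈ P i)
    (hqmem : ∀ i, 1 ≤ i → i ≤ k → q i ∈ P i)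
    (hpmin : ∀ r : ℕ → EuclideanSpace ℝ (Fin 2), r 0 = d → r (k + 1) = d →
      (∀ i, 1 ≤ i → i ≤ k → r i ∈ P i) →
      ∑ i ∈ Finset.range (k + 1), dist (p i) (p (i + 1)) ≤
        ∑ i ∈ Finset.range (k + 1), dist (r i) (r (i + 1)))
    (hqmin : ∀ r : ℕ → EuclideanSpace ℝ (Fin 2), r 0 = d → r (k + 1) = d →
      (∀ i, 1 ≤ i → i ≤ k → r i ∈ P i) →
      ∑ i ∈ Finset.range (k + 1), dist (q i) (q (i + 1)) ≤
        ∑ i ∈ Finset.range (k + 1), dist (r i) (r (i + 1)))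
    (hnd : ∀ i, 1 ≤ i → i ≤ k → p i ≠ q i →
      p (i - 1) ∉ affineSpan ℝ ({p i, q i} : Set (EuclideanSpace ℝ (Fin 2)))) :
    ∀ i ≤ k + 1, p i = q i := by
  set r : ℕ → EuclideanSpace ℝ (Fin 2) := fun i => midpoint ℝ (p i) (q i) with hr
  have hr0 : r 0 = d := by simp [hr, hp0, hq0]
  have hrk : r (k + 1) = d := by simp [hr, hpk, hqk]
  have hrmem : ∀ i, 1 ≤ i → i ≤ k → r i ∈ P i := fun i h1 h2 =>
    (hP i h1 h2).segment_subset (hpmem i h1 h2) (hqmem i h1 h2) (midpoint_mem_segment _ _)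
  have hpq : ∑ i ∈ Finset.range (k + 1), dist (p i) (p (i + 1)) =
      ∑ i ∈ Finset.range (k + 1), dist (q i) (q (i + 1)) :=
    le_antisymm (hpmin q hq0 hqk hqmem) (hqmin p hp0 hpk hpmem)
  have hterm : ∀ i ∈ Finset.range (k + 1),
      dist (r i) (r (i + 1)) ≤ (dist (p i) (p (i + 1)) + dist (q i) (q (i + 1))) / 2 :=
    fun i _ => dist_midpoint_midpoint_le _ _ _ _
  have hsum : ∑ i ∈ Finset.range (k + 1), dist (r i) (r (i + 1)) =
      ∑ i ∈ Finset.range (k + 1), (dist (p i) (p (i + 1)) + dist (q i) (q (i + 1))) / 2 := by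
    have h1 : ∑ i ∈ Finset.range (k + 1), (dist (p i) (p (i + 1)) + dist (q i) (q (i + 1))) / 2
        = ∑ i ∈ Finset.range (k + 1), dist (p i) (p (i + 1)) := by
      rw [← Finset.sum_div, Finset.sum_add_distrib, ← hpq]; ring
    have h2 := hpmin r hr0 hrk hrmem
    have h3 := Finset.sum_le_sum hterm
    linarith [h1 ▸ h3, h2]
  have heq := (Finset.sum_eq_sum_iff_of_le hterm).mp hsum
  -- main induction
  have H : ∀ i, i ≤ k → p i = q i := by
    intro i
    induction i with
    | zero => intro _; rw [hp0, hq0]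
    | succ n ih =>
      intro hn1
      by_contra hne
      have hpn : p n = q n := ih (by omega)
      have he := heq n (Finset.mem_range.mpr (by omega))
      have hrn : r n = p n := by simp [hr, ← hpn]
      rw [hrn] at he
      simp only [hr] at he
      -- he : dist (p n) (midpoint ℝ (p (n+1)) (q (n+1))) = (dist (p n) (p (n+1)) + dist (q n) (q (n+1)))/2
      have hsr : SameRay ℝ (p n - p (n + 1)) (p n - q (n + 1)) := by
        rw [sameRay_iff_norm_add]
        have hm : p n - midpoint ℝ (p (n + 1)) (q (n + 1)) =
            (2:ℝ)⁻¹ • ((p n - p (n + 1)) + (p n - q (n + 1))) := by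
          rw [midpoint_eq_smul_add, invOf_eq_inv]
          module
        have := he
        rw [dist_eq_norm, hm, norm_smul, ← hpn] at this
        simp only [norm_inv, Real.norm_ofNat] at this
        rw [dist_eq_norm, dist_eq_norm] at this
        linarith
      have hne' : p (n + 1) ≠ q (n + 1) := hne
      have := hnd (n + 1) (by omega) hn1 hne'
      simp only [Nat.add_sub_cancel] at this
      exact this (mem_span_of_sameRay hne' hsr)
  intro i hi
  rcases Nat.lt_or_ge i (k + 1) with h | h
  · exact H i (by omega)
  · have : i = k + 1 := by omega
    rw [this, hpk, hqk]
end

section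
/- Let d ∈ ℝ² be a depot and let P₁, …, P_k ⊆ ℝ² be convex sets. Let (p₁, …, p_k) with p_i ∈ P_i for each i, and set p₀ = p_{k+1} = d. Assume p_i ≠ p_{i−1} for every i with 1 ≤ i ≤ k+1, and assume that for every i with 1 ≤ i ≤ k, the point p_i minimizes x ↦ dist(p_{i−1}, x) + dist(x, p_{i+1}) over P_i. Then (p₁, …, p_k) minimizes the tour length over P₁ × ⋯ × P_k. -/
open scoped RealInnerProductSpace

variable {F : Type*} [NormedAddCommGroup F] [InnerProductSpace ℝ F]

/-- Quadratic upper bound for the norm near `z ≠ 0`. -/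
lemma elastic_key (z v : F) (hz : z ≠ 0) (t : ℝ) :
    ‖z + t • v‖ ≤ ‖z‖ + t * (⟪z, v⟫ / ‖z‖) + t ^ 2 * (‖v‖ ^ 2 / (2 * ‖z‖)) := by
  have hz' : 0 < ‖z‖ := norm_pos_iff.mpr hz
  have h1 : ‖z + t • v‖ ^ 2 = ‖z‖ ^ 2 + 2 * (t * ⟪z, v⟫) + t ^ 2 * ‖v‖ ^ 2 := by
    rw [norm_add_sq_real, real_inner_smul_right, norm_smul]
    simp [mul_pow, sq_abs]
    try ring
  have h2 : 2 * ‖z‖ * ‖z + t • v‖ ≤ ‖z‖ ^ 2 + ‖z + t • v‖ ^ 2 := two_mul_le_add_sq _ _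
  have h3 : ‖z + t • v‖ ≤ (2 * ‖z‖ ^ 2 + 2 * (t * ⟪z, v⟫) + t ^ 2 * ‖v‖ ^ 2) / (2 * ‖z‖) := by
    rw [le_div_iff₀ (by positivity)]
    nlinarith
  calc ‖z + t • v‖ ≤ _ := h3
    _ = ‖z‖ + t * (⟪z, v⟫ / ‖z‖) + t ^ 2 * (‖v‖ ^ 2 / (2 * ‖z‖)) := by
        field_simp

/-- Linear lower bound (subgradient inequality) for the norm. -/
lemma elastic_lower (z w : F) (hz : z ≠ 0) : ‖z‖ + ⟪z, w⟫ / ‖z‖ ≤ ‖z + w‖ := by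
  have hz' : 0 < ‖z‖ := norm_pos_iff.mpr hz
  have h : ⟪z, z + w⟫ ≤ ‖z‖ * ‖z + w‖ := real_inner_le_norm _ _
  have h2 : ⟪z, z + w⟫ = ‖z‖ ^ 2 + ⟪z, w⟫ := by
    rw [inner_add_right, real_inner_self_eq_norm_sq]
  have h3 : ‖z‖ + ⟪z, w⟫ / ‖z‖ = (‖z‖ ^ 2 + ⟪z, w⟫) / ‖z‖ := by
    field_simp
  rw [h3, div_le_iff₀ hz']
  nlinarith

/-- First-order optimality condition at a local (hence global) minimizer of
`x ↦ ‖x-a‖ + ‖x-b‖` over a convex set. -/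
lemma elastic_first_order {P : Set F} (hP : Convex ℝ P) {a b p : F}
    (ha : p ≠ a) (hb : p ≠ b) (hp : p ∈ P)
    (hmin : ∀ x ∈ P, ‖p - a‖ + ‖p - b‖ ≤ ‖x - a‖ + ‖x - b‖)
    {x : F} (hx : x ∈ P) :
    0 ≤ ⟪p - a, x - p⟫ / ‖p - a‖ + ⟪p - b, x - p⟫ / ‖p - b‖ := by
  have hna : 0 < ‖p - a‖ := by rw [norm_pos_iff, sub_ne_zero]; exact ha
  have hnb : 0 < ‖p - b‖ := by rw [norm_pos_iff, sub_ne_zero]; exact hb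
  set v := x - p with hv
  set S := ⟪p - a, v⟫ / ‖p - a‖ + ⟪p - b, v⟫ / ‖p - b‖ with hS
  set C := ‖v‖ ^ 2 / (2 * ‖p - a‖) + ‖v‖ ^ 2 / (2 * ‖p - b‖) with hC
  have hC0 : 0 ≤ C := by positivity
  have hstep : ∀ t : ℝ, 0 < t → t ≤ 1 → 0 ≤ S + t * C := by
    intro t ht ht1
    have hmem : p + t • v ∈ P := by
      have h := hP hp hx (by linarith : (0:ℝ) ≤ 1 - t) (le_of_lt ht) (by ring)
      have : (1 - t) • p + t • x = p + t • v := by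
        rw [hv]; module
      rwa [this] at h
    have h1 := hmin _ hmem
    have ha' : ‖p + t • v - a‖ ≤ ‖p - a‖ + t * (⟪p - a, v⟫ / ‖p - a‖)
        + t ^ 2 * (‖v‖ ^ 2 / (2 * ‖p - a‖)) := by
      have := elastic_key (p - a) v (sub_ne_zero.mpr ha) t
      have he : p + t • v - a = p - a + t • v := by abel
      rwa [he]
    have hb' : ‖p + t • v - b‖ ≤ ‖p - b‖ + t * (⟪p - b, v⟫ / ‖p - b‖)
        + t ^ 2 * (‖v‖ ^ 2 / (2 * ‖p - b‖)) := by
      have := elastic_key (p - b) v (sub_ne_zero.mpr hb) t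
      have he : p + t • v - b = p - b + t • v := by abel
      rwa [he]
    have h4 : 0 ≤ t * S + t ^ 2 * C := by
      rw [hS, hC]; nlinarith [h1, ha', hb']
    nlinarith [h4, mul_pos ht ht]
  by_contra hneg
  push_neg at hneg
  have hSneg : S < 0 := hneg
  set t := min 1 (-S / (C + 1)) with htdef
  have ht0 : 0 < t := lt_min one_pos (div_pos (by linarith) (by linarith))
  have ht1 : t ≤ 1 := min_le_left _ _
  have h := hstep t ht0 ht1
  have h5 : t * C ≤ (-S / (C + 1)) * C :=
    mul_le_mul_of_nonneg_right (min_le_right _ _) hC0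
  have h6 : (-S / (C + 1)) * C < -S := by
    rw [div_mul_eq_mul_div, div_lt_iff₀ (by linarith)]
    nlinarith
  have h7 : t * C < -S := lt_of_le_of_lt h5 h6
  linarith

/-- Global optimality of fixed points of the iterative elastic improvement:
if each waypoint `pᵢ` of a tour through convex regions `P₁, …, P_k` (with
`p₀ = p_{k+1} = d` and consecutive waypoints distinct) minimizes the sum of
distances to its two neighbors over its own region, then the tour is a
globally shortest tour through the regions in that order. -/
theorem elastic_improv_global_optimality (k : ℕ)
    (d : EuclideanSpace ℝ (Fin 2))
    (P : ℕ → Set (EuclideanSpace ℝ (Fin 2)))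
    (hP : ∀ i, 1 ≤ i → i ≤ k → Convex ℝ (P i))
    (p : ℕ → EuclideanSpace ℝ (Fin 2))
    (hp0 : p 0 = d) (hpk : p (k + 1) = d)
    (hpmem : ∀ i, 1 ≤ i → i ≤ k → p i ∈ P i)
    (hdistinct : ∀ i, 1 ≤ i → i ≤ k + 1 → p i ≠ p (i - 1))
    (hlocal : ∀ i, 1 ≤ i → i ≤ k → ∀ x ∈ P i,
      dist (p (i - 1)) (p i) + dist (p i) (p (i + 1)) ≤
        dist (p (i - 1)) x + dist x (p (i + 1))) :
    ∀ q : ℕ → EuclideanSpace ℝ (Fin 2), q 0 = d → q (k + 1) = d →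
      (∀ i, 1 ≤ i → i ≤ k → q i ∈ P i) →
      ∑ i ∈ Finset.range (k + 1), dist (p i) (p (i + 1)) ≤
        ∑ i ∈ Finset.range (k + 1), dist (q i) (q (i + 1)) := by
  intro q hq0 hqk hqmem
  set e : ℕ → EuclideanSpace ℝ (Fin 2) := fun i => q i - p i with he
  have he0 : e 0 = 0 := by simp [he, hq0, hp0]
  have hek : e (k + 1) = 0 := by simp [he, hqk, hpk]
  set φ : ℕ → ℝ := fun j => ⟪p j - p (j - 1), e j⟫ / ‖p j - p (j - 1)‖ with hφ
  set ψ : ℕ → ℝ := fun i => ⟪p (i + 1) - p i, e i⟫ / ‖p (i + 1) - p i‖ with hψ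
  -- pointwise bound
  have hpt : ∀ i ∈ Finset.range (k + 1),
      dist (p i) (p (i + 1)) + (φ (i + 1) - ψ i) ≤ dist (q i) (q (i + 1)) := by
    intro i hi
    rw [Finset.mem_range] at hi
    have hz : p (i + 1) - p i ≠ 0 := by
      have := hdistinct (i + 1) (by omega) (by omega)
      simpa [sub_ne_zero] using this
    have hsplit : q (i + 1) - q i = (p (i + 1) - p i) + (e (i + 1) - e i) := by
      simp only [he]; abel
    have hlow := elastic_lower (p (i + 1) - p i) (e (i + 1) - e i) hz
    rw [← hsplit] at hlow
    have h1 : dist (q i) (q (i + 1)) = ‖q (i + 1) - q i‖ := by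
      rw [dist_comm, dist_eq_norm]
    have h2 : dist (p i) (p (i + 1)) = ‖p (i + 1) - p i‖ := by
      rw [dist_comm, dist_eq_norm]
    have h3 : φ (i + 1) - ψ i
        = ⟪p (i + 1) - p i, e (i + 1) - e i⟫ / ‖p (i + 1) - p i‖ := by
      simp only [hφ, hψ, Nat.add_sub_cancel, inner_sub_right]
      ring
    rw [h1, h2, h3]
    exact hlow
  have hsum := Finset.sum_le_sum hpt
  rw [Finset.sum_add_distrib] at hsum
  -- the correction sum is nonnegative
  have hcorr : 0 ≤ ∑ i ∈ Finset.range (k + 1), (φ (i + 1) - ψ i) := by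
    have hφk : φ (k + 1) = 0 := by simp [hφ, hek]
    have hψ0 : ψ 0 = 0 := by simp [hψ, he0]
    have hA : ∑ i ∈ Finset.range (k + 1), φ (i + 1)
        = ∑ i ∈ Finset.range k, φ (i + 1) + φ (k + 1) :=
      Finset.sum_range_succ _ k
    have hB : ∑ i ∈ Finset.range (k + 1), ψ i
        = ∑ i ∈ Finset.range k, ψ (i + 1) + ψ 0 :=
      Finset.sum_range_succ' _ k
    have hE : ∑ i ∈ Finset.range (k + 1), (φ (i + 1) - ψ i)
        = ∑ i ∈ Finset.range k, (φ (i + 1) - ψ (i + 1)) := by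
      rw [Finset.sum_sub_distrib, hA, hB, hφk, hψ0, Finset.sum_sub_distrib]
      ring
    rw [hE]
    apply Finset.sum_nonneg
    intro i hi
    rw [Finset.mem_range] at hi
    set j := i + 1 with hj
    have hj1 : 1 ≤ j := by omega
    have hjk : j ≤ k := by omega
    have ha : p j ≠ p (j - 1) := hdistinct j hj1 (by omega)
    have hb : p j ≠ p (j + 1) := by
      have := hdistinct (j + 1) (by omega) (by omega)
      simpa using this.symm
    have hmin : ∀ x ∈ P j, ‖p j - p (j - 1)‖ + ‖p j - p (j + 1)‖ ≤
        ‖x - p (j - 1)‖ + ‖x - p (j + 1)‖ := by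
      intro x hx
      have := hlocal j hj1 hjk x hx
      rw [dist_eq_norm, dist_eq_norm, dist_eq_norm, dist_eq_norm,
        norm_sub_rev (p (j - 1)) (p j), norm_sub_rev (p (j - 1)) x] at this
      exact this
    have hfo := elastic_first_order (hP j hj1 hjk) ha hb (hpmem j hj1 hjk) hmin
      (hqmem j hj1 hjk)
    have hej : e j = q j - p j := rfl
    have hφψ : φ j - ψ j = ⟪p j - p (j - 1), q j - p j⟫ / ‖p j - p (j - 1)‖
        + ⟪p j - p (j + 1), q j - p j⟫ / ‖p j - p (j + 1)‖ := by
      simp only [hφ, hψ, hej]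
      rw [norm_sub_rev (p (j + 1)) (p j),
        show p (j + 1) - p j = -(p j - p (j + 1)) from by abel, inner_neg_left]
      ring
    rw [hφψ]
    exact hfo
  linarith
end

section
/- Let d ∈ ℝ² be a depot and let P₁, …, P_k ⊆ ℝ² be convex sets. Suppose (p₁, …, p_k) and (q₁, …, q_k), with p_i, q_i ∈ P_i for each i, both minimize the tour length over P₁ × ⋯ × P_k. Setting p₀ = q₀ = d and p_{k+1} = q_{k+1} = d, for every i with 0 ≤ i ≤ k the vectors p_{i+1} − p_i and q_{i+1} − q_i lie on a common ray from the origin (i.e., they are nonnegatively parallel: one is a nonnegative scalar multiple of the other, or both are related by nonnegative scalings of a common vector). -/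
/-- Parallel-edge property of optimal tours through convex regions: if
`(p₁, …, p_k)` and `(q₁, …, q_k)` (with `p₀ = q₀ = p_{k+1} = q_{k+1} = d`)
both minimize the tour length over convex regions `P₁, …, P_k`, then for every
`0 ≤ i ≤ k` the edge vectors `p_{i+1} − p_i` and `q_{i+1} − q_i` lie on a
common ray from the origin. -/
theorem optimal_tours_parallel_edges (k : ℕ)
    (d : EuclideanSpace ℝ (Fin 2))
    (P : ℕ → Set (EuclideanSpace ℝ (Fin 2)))
    (hP : ∀ i, 1 ≤ i → i ≤ k → Convex ℝ (P i))
    (p q : ℕ → EuclideanSpace ℝ (Fin 2))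
    (hp0 : p 0 = d) (hpk : p (k + 1) = d)
    (hq0 : q 0 = d) (hqk : q (k + 1) = d)
    (hpmem : ∀ i, 1 ≤ i → i ≤ k → p i ∈ P i)
    (hqmem : ∀ i, 1 ≤ i → i ≤ k → q i ∈ P i)
    (hpmin : ∀ r : ℕ → EuclideanSpace ℝ (Fin 2), r 0 = d → r (k + 1) = d →
      (∀ i, 1 ≤ i → i ≤ k → r i ∈ P i) →
      ∑ i ∈ Finset.range (k + 1), dist (p i) (p (i + 1)) ≤
        ∑ i ∈ Finset.range (k + 1), dist (r i) (r (i + 1)))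
    (hqmin : ∀ r : ℕ → EuclideanSpace ℝ (Fin 2), r 0 = d → r (k + 1) = d →
      (∀ i, 1 ≤ i → i ≤ k → r i ∈ P i) →
      ∑ i ∈ Finset.range (k + 1), dist (q i) (q (i + 1)) ≤
        ∑ i ∈ Finset.range (k + 1), dist (r i) (r (i + 1))) :
    ∀ i ≤ k, SameRay ℝ (p (i + 1) - p i) (q (i + 1) - q i) := by
  set r : ℕ → EuclideanSpace ℝ (Fin 2) := fun i => midpoint ℝ (p i) (q i) with hr
  have hr0 : r 0 = d := by simp [hr, hp0, hq0]
  have hrk : r (k + 1) = d := by simp [hr, hpk, hqk]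
  have hrmem : ∀ i, 1 ≤ i → i ≤ k → r i ∈ P i := fun i h1 h2 =>
    (hP i h1 h2).segment_subset (hpmem i h1 h2) (hqmem i h1 h2)
      (midpoint_mem_segment _ _)
  have hterm : ∀ i ∈ Finset.range (k + 1),
      dist (r i) (r (i + 1)) ≤ (dist (p i) (p (i + 1)) + dist (q i) (q (i + 1))) / 2 :=
    fun i _ => dist_midpoint_midpoint_le _ _ _ _
  have hSpq : ∑ i ∈ Finset.range (k + 1), dist (p i) (p (i + 1)) =
      ∑ i ∈ Finset.range (k + 1), dist (q i) (q (i + 1)) :=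
    le_antisymm (hpmin q hq0 hqk hqmem) (hqmin p hp0 hpk hpmem)
  have hsum : ∑ i ∈ Finset.range (k + 1),
      (dist (p i) (p (i + 1)) + dist (q i) (q (i + 1))) / 2 =
      ∑ i ∈ Finset.range (k + 1), dist (p i) (p (i + 1)) := by
    rw [← Finset.sum_div, Finset.sum_add_distrib, ← hSpq]
    ring
  have hle : ∑ i ∈ Finset.range (k + 1), dist (r i) (r (i + 1)) ≤
      ∑ i ∈ Finset.range (k + 1), dist (p i) (p (i + 1)) := by
    calc _ ≤ ∑ i ∈ Finset.range (k + 1),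
        (dist (p i) (p (i + 1)) + dist (q i) (q (i + 1))) / 2 := Finset.sum_le_sum hterm
      _ = _ := hsum
  have heqsum : ∑ i ∈ Finset.range (k + 1), dist (r i) (r (i + 1)) =
      ∑ i ∈ Finset.range (k + 1),
        (dist (p i) (p (i + 1)) + dist (q i) (q (i + 1))) / 2 := by
    have h1 := hpmin r hr0 hrk hrmem
    have h2 : ∑ i ∈ Finset.range (k + 1), dist (r i) (r (i + 1)) =
        ∑ i ∈ Finset.range (k + 1), dist (p i) (p (i + 1)) := le_antisymm hle h1
    rw [h2, hsum]
  have heach := (Finset.sum_eq_sum_iff_of_le hterm).mp heqsum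
  intro i hi
  have hi' : i ∈ Finset.range (k + 1) := Finset.mem_range.mpr (Nat.lt_succ_of_le hi)
  have heq := heach i hi'
  -- translate to norm equality
  have hmid : dist (r i) (r (i + 1)) =
      ‖(p i - p (i + 1)) + (q i - q (i + 1))‖ / 2 := by
    rw [hr]
    simp only [dist_eq_norm, midpoint_eq_smul_add]
    rw [← smul_sub, norm_smul]
    have : (p i + q i) - (p (i + 1) + q (i + 1)) =
        (p i - p (i + 1)) + (q i - q (i + 1)) := by abel
    rw [this]
    simp [norm_inv]
    ring
  rw [hmid, dist_eq_norm, dist_eq_norm] at heq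
  have hnorm : ‖(p i - p (i + 1)) + (q i - q (i + 1))‖ =
      ‖p i - p (i + 1)‖ + ‖q i - q (i + 1)‖ := by linarith
  have hray : SameRay ℝ (p i - p (i + 1)) (q i - q (i + 1)) :=
    sameRay_iff_norm_add.mpr hnorm
  have := hray.neg
  simpa [neg_sub] using this
end
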